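/- arXiv:2405.15391 — 2 statements merged into one kernel-verified Lean document; each statement's English description precedes it below -/
import Mathlib

section
/- Let g ∈ Aut(T) and let u be an internal first-level vertex of T whose ⟨g⟩-orbit has length ℓ. Then the restriction (φ^g)_u: T_u → (P^g)_{φ^g(u)} coincides with the tree composition φ^{[g^ℓ]_u} of T_u determined by the automorphism [g^ℓ]_u ∈ Aut(T_u); equivalently, for all u', v' ∈ T_u, φ^g(u') = φ^g(v') if and only if u' and v' lie in the same ⟨[g^ℓ]_u⟩-orbit. -/
open Function

structure FRTree : Type 1 where
  V : Type
  [fintypeV : Fintype V]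
  [decEqV : DecidableEq V]
  root : V
  parent : V → V
  parent_root : parent root = root
  reaches_root : ∀ v : V, ∃ n : ℕ, parent^[n] v = root

attribute [instance] FRTree.fintypeV FRTree.decEqV

namespace FRTree

/-- `w` is a child of `u`. -/
def IsChild (T : FRTree) (w u : T.V) : Prop := w ≠ T.root ∧ T.parent w = u

instance (T : FRTree) (w u : T.V) : Decidable (T.IsChild w u) :=
  inferInstanceAs (Decidable (w ≠ T.root ∧ T.parent w = u))

/-- A vertex is internal if it has at least one child. -/
def Internal (T : FRTree) (u : T.V) : Prop := ∃ w, T.IsChild w u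

/-- A leaf is a vertex without children. -/
def IsLeaf (T : FRTree) (u : T.V) : Prop := ¬ T.Internal u

/-- Two (non-root) vertices are siblings if they have the same parent. -/
def Siblings (T : FRTree) (u v : T.V) : Prop :=
  u ≠ T.root ∧ v ≠ T.root ∧ T.parent u = T.parent v

/-- The set of vertices of the subtree `T_u`:  `u` together with all of its descendants. -/
def Desc (T : FRTree) (u : T.V) : Set T.V := {v | ∃ n : ℕ, T.parent^[n] v = u}

/-- First level vertices. -/
def FirstLevel (T : FRTree) (v : T.V) : Prop := v ≠ T.root ∧ T.parent v = T.root

/-- The children of a vertex, as a finset. -/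
def children (T : FRTree) (u : T.V) : Finset T.V :=
  Finset.univ.filter (fun w => T.IsChild w u)

end FRTree

open FRTree

/-- Rooted tree homomorphism: sends root to root, non-root vertices to non-root
vertices and commutes with taking the parent.  (This is the same as a graph
homomorphism between the underlying trees sending root to root.) -/
def IsHom (T P : FRTree) (φ : T.V → P.V) : Prop :=
  φ T.root = P.root ∧
  ∀ v : T.V, v ≠ T.root → φ v ≠ P.root ∧ P.parent (φ v) = φ (T.parent v)

/-- Isomorphism of rooted trees. -/
def IsIsom (T P : FRTree) (φ : T.V → P.V) : Prop :=
  IsHom T P φ ∧ Function.Bijective φ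

/-- The automorphism group of a rooted tree, as a subgroup of the permutations of the vertices. -/
def FRTree.Aut (T : FRTree) : Subgroup (Equiv.Perm T.V) where
  carrier := {g : Equiv.Perm T.V | IsHom T T ⇑g}
  one_mem' := ⟨rfl, fun v hv => ⟨hv, rfl⟩⟩
  mul_mem' := by
    rintro a b ⟨ha0, ha⟩ ⟨hb0, hb⟩
    refine ⟨?_, fun v hv => ?_⟩
    · simp only [Equiv.Perm.coe_mul, Function.comp_apply, hb0, ha0]
    · obtain ⟨hb1, hb2⟩ := hb v hv
      obtain ⟨ha1, ha2⟩ := ha (b v) hb1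
      refine ⟨by simpa using ha1, ?_⟩
      simp only [Equiv.Perm.coe_mul, Function.comp_apply]
      rw [ha2, hb2]
  inv_mem' := by
    rintro a ⟨ha0, ha⟩
    refine ⟨a.injective (by simp [ha0]), fun v hv => ?_⟩
    have h1 : a⁻¹ v ≠ T.root := by
      intro h
      apply hv
      have h2 := congrArg a h
      rwa [Equiv.Perm.coe_inv, Equiv.apply_symm_apply, ha0] at h2
    obtain ⟨_, h3⟩ := ha (a⁻¹ v) h1
    rw [Equiv.Perm.coe_inv, Equiv.apply_symm_apply] at h3
    exact ⟨h1, a.injective (by rw [Equiv.Perm.coe_inv, ← h3, Equiv.apply_symm_apply])⟩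

/-- `τ` restricts to an isomorphism from the subtree `T_u` onto the subtree `T'_{u'}`.
(The values of `τ` outside of `T_u` are irrelevant.) -/
def IsSubtreeIso (T T' : FRTree) (u : T.V) (u' : T'.V) (τ : T.V → T'.V) : Prop :=
  τ u = u' ∧ Set.BijOn τ (T.Desc u) (T'.Desc u') ∧
  ∀ w ∈ T.Desc u, w ≠ u → τ w ≠ u' ∧ T'.parent (τ w) = τ (T.parent w)

/-- A tree composition (`P`-composition of `T`): a surjective rooted tree homomorphism
satisfying the regularity condition. -/
def IsComposition (T P : FRTree) (φ : T.V → P.V) : Prop :=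
  IsHom T P φ ∧ Function.Surjective φ ∧
  ∀ u v : T.V, u ≠ v → T.Internal u → T.Internal v → T.Siblings u v → φ u = φ v →
    ∃ g ∈ T.Aut, g u = v ∧ ∀ w ∈ T.Desc u, φ (g w) = φ w
/-- Equivalence of the restrictions `φ_u : T_u → P_{φ u}` and `ψ_{u'} : T'_{u'} → P'_{ψ u'}`
of two tree compositions. -/
def RestrEquiv (T P T' P' : FRTree) (φ : T.V → P.V) (ψ : T'.V → P'.V)
    (u : T.V) (u' : T'.V) : Prop :=
  ∃ (τ : T.V → T'.V) (ω : P.V → P'.V),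
    IsSubtreeIso T T' u u' τ ∧ IsSubtreeIso P P' (φ u) (ψ u') ω ∧
    ∀ w ∈ T.Desc u, ω (φ w) = ψ (τ w)

/-- Strict equivalence of the restrictions `δ_u : T_u → Q_{δ u}` and
`δ'_{u'} : T'_{u'} → Q_{δ' u'}` of two maps into the same tree `Q`
(the isomorphism on the target side is the identity). -/
def RestrStrictEquiv (T Q T' : FRTree) (δ : T.V → Q.V) (δ' : T'.V → Q.V)
    (u : T.V) (u' : T'.V) : Prop :=
  δ u = δ' u' ∧ ∃ τ : T.V → T'.V, IsSubtreeIso T T' u u' τ ∧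
    ∀ w ∈ T.Desc u, δ' (τ w) = δ w

/-- Equivalence of tree compositions. -/
def CompEquiv (T P T' P' : FRTree) (φ : T.V → P.V) (ψ : T'.V → P'.V) : Prop :=
  ∃ (τ : T.V → T'.V) (ω : P.V → P'.V),
    IsIsom T T' τ ∧ IsIsom P P' ω ∧ ω ∘ φ = ψ ∘ τ

/-- Strict equivalence of tree compositions with the same target tree. -/
def StrictEquiv (T T' P : FRTree) (φ : T.V → P.V) (ψ : T'.V → P.V) : Prop :=
  ∃ τ : T.V → T'.V, IsIsom T T' τ ∧ ψ ∘ τ = φ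

/-- `α : P → Q` is the quotient of the tree composition `φ : T → P`. -/
def IsQuotient (T P Q : FRTree) (φ : T.V → P.V) (α : P.V → Q.V) : Prop :=
  IsComposition P Q α ∧
  -- (a) for every internal `x ∈ P`, all children of `x` which are leaves are sent by `α`
  -- to a single vertex, which is the unique child of `α x` that is a leaf
  (∀ x : P.V, P.Internal x → ∀ y y' : P.V, P.IsChild y x → P.IsLeaf y →
    P.IsChild y' x → P.IsLeaf y' → α y = α y') ∧
  (∀ x y : P.V, P.Internal x → P.IsChild y x → P.IsLeaf y →
    Q.IsChild (α y) (α x) ∧ Q.IsLeaf (α y) ∧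
      ∀ z : Q.V, Q.IsChild z (α x) → Q.IsLeaf z → z = α y) ∧
  -- (b) distinct internal siblings of `Q` separate inequivalent restrictions of `φ`
  (∀ a b : Q.V, a ≠ b → Q.Internal a → Q.Internal b → Q.Siblings a b →
    ∀ u v : T.V, α (φ u) = a → α (φ v) = b → ¬ RestrEquiv T P T P φ φ u v) ∧
  -- (c) vertices with the same image under `α ∘ φ` have equivalent restrictions of `φ`,
  -- and strictly equivalent restrictions of `α ∘ φ`
  (∀ u w : T.V, T.Internal u → T.Internal w → α (φ u) = α (φ w) →
    RestrEquiv T P T P φ φ u w ∧ RestrStrictEquiv T Q T (α ∘ φ) (α ∘ φ) u w)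

/-- The type `|φ⁻¹|` of a tree composition: `|φ⁻¹|(root) = 0` and, for `y` non-root with
parent `x`, `|φ⁻¹|(y) = |φ⁻¹(y) ∩ Ch(u)|` where `u` is any vertex with `φ u = x` (for a tree
composition this number does not depend on the choice of `u`, so it equals the `sSup` below). -/
noncomputable def typeOf (T P : FRTree) (φ : T.V → P.V) (y : P.V) : ℕ :=
  if y = P.root then 0
  else sSup {n : ℕ | ∃ u : T.V, φ u = P.parent y ∧
    n = (Finset.univ.filter (fun w => T.IsChild w u ∧ φ w = y)).card}

/-- The partition `λ^b` associated to a non-root vertex `b` of the quotient tree: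
the multiset of the numbers `|φ⁻¹|(y)`, for `y` ranging over the children of `x`
with `α y = b` (where `x` is any vertex of `P` with `α x = ` parent of `b`). -/
noncomputable def assocPartition (T P Q : FRTree) (φ : T.V → P.V) (α : P.V → Q.V)
    (x : P.V) (b : Q.V) : Multiset ℕ :=
  ((Finset.univ.filter (fun y => P.IsChild y x ∧ α y = b)).val).map (typeOf T P φ)

/-- `Λ` is the partitional labeling of the quotient tree `Q` associated to the tree
composition `φ : T → P` (with quotient map `α : P → Q`). -/
def IsAssocLabeling (T P Q : FRTree) (φ : T.V → P.V) (α : P.V → Q.V)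
    (Λ : Q.V → Multiset ℕ) : Prop :=
  IsQuotient T P Q φ α ∧
  ∀ b : Q.V, b ≠ Q.root → ∀ x : P.V, α x = Q.parent b →
    Λ b = assocPartition T P Q φ α x b

/-- A partitional labeling: every non-root vertex is labeled by an integer partition
(a multiset of positive integers). -/
def IsPartitionalLabeling (Q : FRTree) (Λ : Q.V → Multiset ℕ) : Prop :=
  ∀ a : Q.V, a ≠ Q.root → ∀ n ∈ Λ a, 0 < n

/-- Isomorphism of the restrictions of two partitional labelings to the subtrees `Q_a` and
`Q'_b`, the roots `a`, `b` being regarded as unlabeled. -/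
def LabelRestrIso (Q Q' : FRTree) (Λ : Q.V → Multiset ℕ) (Ξ : Q'.V → Multiset ℕ)
    (a : Q.V) (b : Q'.V) : Prop :=
  ∃ γ : Q.V → Q'.V, IsSubtreeIso Q Q' a b γ ∧
    ∀ c ∈ Q.Desc a, c ≠ a → Λ c = Ξ (γ c)

/-- A tree of partitions. -/
def IsTreeOfPartitions (Q : FRTree) (Λ : Q.V → Multiset ℕ) : Prop :=
  IsPartitionalLabeling Q Λ ∧
  (∀ x y y' : Q.V, Q.IsChild y x → Q.IsLeaf y → Q.IsChild y' x → Q.IsLeaf y' → y = y') ∧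
  (∀ a b : Q.V, a ≠ b → Q.Internal a → Q.Internal b → Q.Siblings a b →
    ¬ LabelRestrIso Q Q Λ Λ a b)

/-- Isomorphism of partitional labelings. -/
def LabelIso (Q Q' : FRTree) (Λ : Q.V → Multiset ℕ) (Ξ : Q'.V → Multiset ℕ) : Prop :=
  ∃ γ : Q.V → Q'.V, IsIsom Q Q' γ ∧ ∀ a : Q.V, a ≠ Q.root → Λ a = Ξ (γ a)

/-- `δ : T → Q` is a realization of the tree of partitions `(Λ, Q)` as a tree of
partitions of `T`. -/
def IsRealization (T Q : FRTree) (Λ : Q.V → Multiset ℕ) (δ : T.V → Q.V) : Prop :=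
  IsComposition T Q δ ∧
  ∀ a : Q.V, Q.Internal a → ∀ u : T.V, δ u = a →
    ∑ b ∈ Q.children a, (Λ b).sum = (T.children u).card

/-- `(Λ, Q)` belongs to `Par(T)`. -/
def InParT (T Q : FRTree) (Λ : Q.V → Multiset ℕ) : Prop :=
  IsTreeOfPartitions Q Λ ∧ ∃ δ : T.V → Q.V, IsRealization T Q Λ δ

/-- The compatibility condition on `α : P → Q` entering the definition of `Par(T, P)`:
at every vertex of `α⁻¹(a)` the numbers of children is the sum of the lengths of the
partitions labeling the children of `a`. -/
def LengthCond (P Q : FRTree) (Λ : Q.V → Multiset ℕ) (α : P.V → Q.V) : Prop :=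
  ∀ a : Q.V, Q.Internal a → ∀ x : P.V, α x = a →
    ∑ b ∈ Q.children a, Multiset.card (Λ b) = (P.children x).card

/-- `(Λ, Q)` belongs to `Par(T, P)`. -/
def InParTP (T P Q : FRTree) (Λ : Q.V → Multiset ℕ) : Prop :=
  InParT T Q Λ ∧ ∃ α : P.V → Q.V, IsComposition P Q α ∧ LengthCond P Q Λ α
/-- A common refinement of the tree compositions `φ : T → P` and `ψ : T → M`. -/
def IsCommonRefinement (T P M R : FRTree) (φ : T.V → P.V) (ψ : T.V → M.V)
    (ρ : T.V → R.V) (ϑ : R.V → P.V) (τ : R.V → M.V) : Prop :=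
  IsComposition T R ρ ∧ IsComposition R P ϑ ∧ IsComposition R M τ ∧
  ϑ ∘ ρ = φ ∧ τ ∘ ρ = ψ

/-- Equivalence of the restricted common refinements `ρ_u` (of `(φ_u, ψ_u)`) and
`ρ_v` (of `(φ_v, ψ_v)`), where `ρ u = a`, `ρ v = b`, `ϑ a = ϑ b` and `τ a = τ b`. -/
def RestrRefEquiv (T P M R : FRTree) (φ : T.V → P.V) (ψ : T.V → M.V)
    (ρ : T.V → R.V) (ϑ : R.V → P.V) (τ : R.V → M.V)
    (u v : T.V) (a b : R.V) : Prop :=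
  ∃ (ζ : T.V → T.V) (γ : R.V → R.V),
    IsSubtreeIso T T u v ζ ∧ IsSubtreeIso R R a b γ ∧
    (∀ w ∈ T.Desc u, φ (ζ w) = φ w) ∧
    (∀ w ∈ T.Desc u, ψ (ζ w) = ψ w) ∧
    (∀ w ∈ T.Desc u, ρ (ζ w) = γ (ρ w)) ∧
    (∀ r ∈ R.Desc a, ϑ (γ r) = ϑ r) ∧
    (∀ r ∈ R.Desc a, τ (γ r) = τ r)

/-- The coarseness condition for a common refinement. -/
def Coarseness (T P M R : FRTree) (φ : T.V → P.V) (ψ : T.V → M.V)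
    (ρ : T.V → R.V) (ϑ : R.V → P.V) (τ : R.V → M.V) : Prop :=
  (∀ a b : R.V, a ≠ b → R.Internal a → R.Internal b → R.Siblings a b →
    ϑ a = ϑ b → τ a = τ b →
    ∀ u v : T.V, ρ u = a → ρ v = b →
      ¬ RestrRefEquiv T P M R φ ψ ρ ϑ τ u v a b) ∧
  (∀ a b : R.V, a ≠ b → R.IsLeaf a → R.IsLeaf b → R.Siblings a b →
    ¬ (ϑ a = ϑ b ∧ τ a = τ b))

/-- Equivalence of two common refinements of the same couple `(φ, ψ)` of tree
compositions of `T`. -/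
def RefEquiv (T P M R R' : FRTree) (φ : T.V → P.V) (ψ : T.V → M.V)
    (ρ : T.V → R.V) (ϑ : R.V → P.V) (τ : R.V → M.V)
    (ρ' : T.V → R'.V) (ϑ' : R'.V → P.V) (τ' : R'.V → M.V) : Prop :=
  ∃ (ζ : T.V → T.V) (γ : R.V → R'.V),
    IsIsom T T ζ ∧ IsIsom R R' γ ∧
    φ ∘ ζ = φ ∧ ψ ∘ ζ = ψ ∧ ρ' ∘ ζ = γ ∘ ρ ∧ ϑ' ∘ γ = ϑ ∧ τ' ∘ γ = τ

/-- The orbit of the tree composition `φ` under the action `g • φ = φ ∘ g⁻¹` of `Aut T`. -/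
def OrbitSet (T P : FRTree) (φ : T.V → P.V) : Type :=
  {ψ : T.V → P.V // ∃ g ∈ T.Aut, ψ = φ ∘ ⇑g⁻¹}

/-- The action of `Aut T` on the orbit of `φ`. -/
def orbAct (T P : FRTree) (φ : T.V → P.V) (g : T.Aut)
    (ψ : OrbitSet T P φ) : OrbitSet T P φ :=
  ⟨ψ.1 ∘ ⇑((g : Equiv.Perm T.V))⁻¹, by
    obtain ⟨h, hh, hψ⟩ := ψ.2
    refine ⟨(g : Equiv.Perm T.V) * h, mul_mem g.2 hh, ?_⟩
    rw [hψ]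
    funext x
    simp [Function.comp, mul_inv_rev]⟩

/-- The permutation representation `M^{|φ⁻¹|}` of `Aut T` on the (complex functions on
the) orbit of the tree composition `φ`. -/
noncomputable def permRep (T P : FRTree) (φ : T.V → P.V) :
    Representation ℂ (T.Aut) (OrbitSet T P φ → ℂ) where
  toFun g :=
    { toFun := fun F ψ => F (orbAct T P φ g⁻¹ ψ)
      map_add' := fun _ _ => rfl
      map_smul' := fun _ _ => rfl }
  map_one' := by
    refine LinearMap.ext fun F => funext fun ψ => ?_
    show F (orbAct T P φ 1⁻¹ ψ) = F ψ
    have h : orbAct T P φ 1⁻¹ ψ = ψ := Subtype.ext (funext fun x => by simp [orbAct])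
    rw [h]
  map_mul' := by
    intro a b
    refine LinearMap.ext fun F => funext fun ψ => ?_
    show F (orbAct T P φ (a * b)⁻¹ ψ) = F (orbAct T P φ b⁻¹ (orbAct T P φ a⁻¹ ψ))
    have h : orbAct T P φ (a * b)⁻¹ ψ = orbAct T P φ b⁻¹ (orbAct T P φ a⁻¹ ψ) :=
      Subtype.ext (funext fun x => by simp [orbAct, mul_inv_rev])
    rw [h]

/-- Equivalence of two representations. -/
def RepEquiv {G : Type*} [Group G] {V W : Type*}
    [AddCommGroup V] [Module ℂ V] [AddCommGroup W] [Module ℂ W]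
    (ρ : Representation ℂ G V) (σ : Representation ℂ G W) : Prop :=
  ∃ e : V ≃ₗ[ℂ] W, ∀ (g : G) (v : V), e (ρ g v) = σ g (e v)

/-- Irreducibility of a representation. -/
def IsIrreducibleRep {G V : Type*} [Group G] [AddCommGroup V] [Module ℂ V]
    (ρ : Representation ℂ G V) : Prop :=
  (∃ v : V, v ≠ 0) ∧
  ∀ U : Submodule ℂ V, (∀ g : G, ∀ v ∈ U, ρ g v ∈ U) → U = ⊥ ∨ U = ⊤

/-- The space of equivariant linear maps between two representations; when `ρ` is
irreducible, its dimension is the multiplicity of `ρ` in `σ`. -/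
def equivariantHoms {G : Type*} [Group G] {V W : Type*}
    [AddCommGroup V] [Module ℂ V] [AddCommGroup W] [Module ℂ W]
    (ρ : Representation ℂ G V) (σ : Representation ℂ G W) :
    Submodule ℂ (V →ₗ[ℂ] W) where
  carrier := {f | ∀ (g : G) (v : V), f (ρ g v) = σ g (f v)}
  add_mem' := by
    intro a b ha hb g v
    simp [ha g v, hb g v]
  zero_mem' := by intro g v; simp
  smul_mem' := by
    intro c f hf g v
    simp [hf g v]

/-- The stabilizer `K_φ` of a tree composition `φ` in `Aut T`. -/
def stab (T P : FRTree) (φ : T.V → P.V) : Subgroup (T.Aut) where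
  carrier := {g | ∀ x : T.V, φ ((g : Equiv.Perm T.V) x) = φ x}
  one_mem' := fun _ => rfl
  mul_mem' := by
    intro a b ha hb x
    simp only [Subgroup.coe_mul, Equiv.Perm.mul_apply]
    rw [ha ((b : Equiv.Perm T.V) x), hb x]
  inv_mem' := by
    intro a ha x
    have := ha (((a : Equiv.Perm T.V))⁻¹ x)
    simp only [Equiv.Perm.coe_inv, Equiv.apply_symm_apply] at this
    simpa using this.symm

/-- The space of the representation of `G` induced by the character `χ` of the
subgroup `K`: complex functions on `G` which are `χ`-covariant for right translation
by `K`; `G` acts by left translation. -/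
noncomputable def IndSpace (G : Type*) [Group G] (K : Subgroup G) (χ : K →* ℂ) :
    Submodule ℂ (G → ℂ) where
  carrier := {f | ∀ (g : G) (k : K), f (g * k) = χ k * f g}
  add_mem' := by
    intro a b ha hb g k
    simp only [Pi.add_apply, ha g k, hb g k]
    ring
  zero_mem' := by intro g k; simp
  smul_mem' := by
    intro c f hf g k
    simp only [Pi.smul_apply, smul_eq_mul, hf g k]
    ring

/-- The representation of `G` induced by the character `χ` of the subgroup `K`. -/
noncomputable def indRep (G : Type*) [Group G] (K : Subgroup G) (χ : K →* ℂ) :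
    Representation ℂ G (IndSpace G K χ) where
  toFun g :=
    { toFun := fun f => ⟨fun x => (f : G → ℂ) (g⁻¹ * x), by
        intro x k
        have h := f.2 (g⁻¹ * x) k
        simpa [mul_assoc] using h⟩
      map_add' := by intro a b; apply Subtype.ext; funext x; rfl
      map_smul' := by intro c a; apply Subtype.ext; funext x; rfl }
  map_one' := by
    refine LinearMap.ext fun f => Subtype.ext (funext fun x => ?_)
    simp
  map_mul' := by
    intro a b
    refine LinearMap.ext fun f => Subtype.ext (funext fun x => ?_)
    simp [mul_assoc]

/-- A sibling swap: an automorphism of order two exchanging the subtrees rooted at two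
distinct siblings `u`, `v` and fixing everything else.  The sign representation of
`Aut T` is the unique homomorphism `Aut T →* ℂ` taking the value `-1` at every
sibling swap. -/
def IsSiblingSwap (T : FRTree) (g : Equiv.Perm T.V) : Prop :=
  ∃ u v : T.V, u ≠ v ∧ T.Siblings u v ∧ g u = v ∧
    (∀ w : T.V, w ∉ T.Desc u → w ∉ T.Desc v → g w = w) ∧ g * g = 1

/-- The conjugate (transpose) of an integer partition, encoded as a multiset. -/
def conjP (m : Multiset ℕ) : Multiset ℕ :=
  ((Multiset.range m.sum).map fun i => Multiset.card (m.filter fun p => i < p)).filter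
    fun n => 0 < n

/-- Two tree compositions of the same tree have `0-1` intersection. -/
def ZeroOneIntersection (T P M : FRTree) (φ : T.V → P.V) (ψ : T.V → M.V) : Prop :=
  ∀ v : T.V, T.Internal v → ∀ x : P.V, ∀ y : M.V,
    P.IsChild x (φ v) → M.IsChild y (ψ v) →
    {w : T.V | φ w = x ∧ ψ w = y}.Subsingleton

/-- `φᵗ : T → Pᵗ` (with quotient `αᵗ`) is a transpose of the tree composition
`φ : T → P` with quotient `α : P → Q` and associated tree of partitions `Λ`. -/
def IsTranspose (T P Q Pt : FRTree) (φ : T.V → P.V) (α : P.V → Q.V)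
    (Λ : Q.V → Multiset ℕ) (φt : T.V → Pt.V) (αt : Pt.V → Q.V) : Prop :=
  IsComposition T Pt φt ∧
  IsAssocLabeling T Pt Q φt αt (fun a => conjP (Λ a)) ∧
  (αt ∘ φt = α ∘ φ) ∧
  ZeroOneIntersection T P Pt φ φt

set_option synthInstance.maxHeartbeats 400000 in
/-- The multiplicity of the irreducible representation `ρ` inside `σ`: the dimension of
the space of equivariant linear maps. -/
noncomputable def repMultiplicity {G : Type*} [Group G] {V W : Type*}
    [AddCommGroup V] [Module ℂ V] [AddCommGroup W] [Module ℂ W]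
    (ρ : Representation ℂ G V) (σ : Representation ℂ G W) : ℕ :=
  Module.finrank ℂ ↥(equivariantHoms ρ σ)

/-!
An automorphism `g` commutes with `parent`, so `g^n` maps `T_u` onto `T_{g^n u}`, and `g^n u`
is again a first-level vertex. Distinct first-level vertices have disjoint subtrees, hence if
`g^n` sends a vertex of `T_u` into `T_u`, then `g^n` fixes `u` and `n` is a multiple of the
orbit length `ℓ` of `u`. So the `⟨g⟩`-orbits meet `T_u` in the orbits of `g^ℓ`, whose
restriction to `T_u` is `[g^ℓ]_u`.
-/

namespace FRTree

variable {T : FRTree} {g : Equiv.Perm T.V} {a b w : T.V}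

theorem iterate_parent_root (n : ℕ) : T.parent^[n] T.root = T.root :=
  Function.iterate_fixed T.parent_root n

theorem FirstLevel.eq_of_mem_desc (ha : T.FirstLevel a) (hb : T.FirstLevel b)
    (hwa : w ∈ T.Desc a) (hwb : w ∈ T.Desc b) : a = b := by
  obtain ⟨k, rfl⟩ := hwa
  obtain ⟨m, rfl⟩ := hwb
  wlog hkm : k ≤ m generalizing k m
  · exact (this _ hb _ ha (by omega)).symm
  obtain ⟨d, rfl⟩ := Nat.exists_eq_add_of_le hkm
  cases d with
  | zero => rfl
  | succ d =>
    -- a proper ancestor of the first-level vertex `parent^[k] w` is the root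
    refine absurd ?_ hb.1
    rw [show k + (d + 1) = d + 1 + k by omega, Function.iterate_add_apply,
      Function.iterate_succ_apply, ha.2, iterate_parent_root]

theorem commute_parent_of_mem_aut (hg : g ∈ T.Aut) : Function.Commute T.parent g := by
  intro v
  by_cases hv : v = T.root
  · rw [hv, hg.1, T.parent_root, hg.1]
  · exact (hg.2 v hv).2

theorem apply_mem_desc_of_mem_aut (hg : g ∈ T.Aut) (hw : w ∈ T.Desc a) :
    g w ∈ T.Desc (g a) := by
  obtain ⟨k, rfl⟩ := hw
  exact ⟨k, (commute_parent_of_mem_aut hg).iterate_left k w⟩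

theorem FirstLevel.apply_of_mem_aut (hg : g ∈ T.Aut) (ha : T.FirstLevel a) :
    T.FirstLevel (g a) :=
  ⟨fun h => ha.1 (g.injective (h.trans hg.1.symm)),
    by rw [commute_parent_of_mem_aut hg a, ha.2, hg.1]⟩

theorem FirstLevel.apply_eq_self_of_mem_aut (hg : g ∈ T.Aut) (ha : T.FirstLevel a)
    (hw : w ∈ T.Desc a) (hgw : g w ∈ T.Desc a) : g a = a :=
  (ha.apply_of_mem_aut hg).eq_of_mem_desc ha (apply_mem_desc_of_mem_aut hg hw) hgw

end FRTree

theorem restriction_of_orbit_composition_general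
    (T : FRTree) (g : Equiv.Perm T.V) (hg : g ∈ T.Aut)
    (u : T.V) (hu : T.FirstLevel u) :
    ∀ u' ∈ T.Desc u, ∀ v' ∈ T.Desc u,
      ((∃ n : ℕ, (g ^ n) u' = v') ↔
        ∃ n : ℕ, (g ^ (Function.minimalPeriod (⇑g) u * n)) u' = v') := by
  intro u' hu' v' hv'
  constructor
  · rintro ⟨n, rfl⟩
    have hfix : Function.IsPeriodicPt g n u :=
      hu.apply_eq_self_of_mem_aut (pow_mem hg n) hu' hv'
    obtain ⟨m, rfl⟩ := hfix.minimalPeriod_dvd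
    exact ⟨m, rfl⟩
  · rintro ⟨n, h⟩
    exact ⟨_, h⟩

/-- **Proposition.**  For `g ∈ Aut T` and `u` an internal first-level vertex whose
`⟨g⟩`-orbit has length `ℓ` (the minimal period of `u` under `g`), the restriction
`(φ^g)_u` coincides with the tree composition `φ^{[g^ℓ]_u}` of `T_u`: two vertices of
`T_u` have the same image under `φ^g` (i.e. lie in the same `⟨g⟩`-orbit) if and only
if they lie in the same `⟨[g^ℓ]_u⟩`-orbit. -/
theorem restriction_of_orbit_composition
    (T : FRTree) (g : Equiv.Perm T.V) (hg : g ∈ T.Aut)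
    (u : T.V) (hu : T.FirstLevel u) (hint : T.Internal u) :
    ∀ u' ∈ T.Desc u, ∀ v' ∈ T.Desc u,
      ((∃ n : ℕ, (g ^ n) u' = v') ↔
        ∃ n : ℕ, (g ^ (Function.minimalPeriod (⇑g) u * n)) u' = v') :=
  restriction_of_orbit_composition_general T g hg u hu
end

section
/- If the tree compositions φ ∈ C(T,P) and ψ ∈ C(T,M) of the same finite rooted tree T are equivalent, then the permutation representations M^{|φ⁻¹|} and M^{|ψ⁻¹|} of Aut(T) are equivalent. -/
open Function

open FRTree

/-! An equivalence `(τ, ω)` from `φ` to `ψ` makes `χ ↦ ω ∘ χ` a bijection from the orbit of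
`φ` onto the orbit of `ψ`, since `ω ∘ φ ∘ g⁻¹ = ψ ∘ (g τ⁻¹)⁻¹`. This bijection commutes with
the action of `Aut T` by precomposition, so it transports one permutation representation
onto the other. -/

theorem Equiv.symm_comp_eq_comp_inv {α β γ : Type*} (e : α ≃ β) (σ : Equiv.Perm γ)
    {f : γ → α} {g : γ → β} (h : e ∘ f = g ∘ σ) : e.symm ∘ g = f ∘ ⇑σ⁻¹ := by
  rw [Equiv.symm_comp_eq, ← Function.comp_assoc, h, Function.comp_assoc]
  simp

namespace OrbitSet

variable {T P M : FRTree} {φ : T.V → P.V} {ψ : T.V → M.V}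

def map (ω : P.V → M.V) (τ : T.Aut) (hcomm : ω ∘ φ = ψ ∘ ⇑(τ : Equiv.Perm T.V)) :
    OrbitSet T P φ → OrbitSet T M ψ := fun χ =>
  ⟨ω ∘ χ.1, by
    obtain ⟨g, hg, hχ⟩ := χ.2
    refine ⟨g * (τ : Equiv.Perm T.V)⁻¹, mul_mem hg (inv_mem τ.2), ?_⟩
    rw [hχ, ← Function.comp_assoc, hcomm]
    funext x
    simp⟩

theorem map_orbAct (ω : P.V → M.V) (τ : T.Aut) (hcomm : ω ∘ φ = ψ ∘ ⇑(τ : Equiv.Perm T.V))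
    (g : T.Aut) (χ : OrbitSet T P φ) :
    map ω τ hcomm (orbAct T P φ g χ) = orbAct T M ψ g (map ω τ hcomm χ) :=
  rfl

def congr (ω : P.V ≃ M.V) (τ : T.Aut) (hcomm : ω ∘ φ = ψ ∘ ⇑(τ : Equiv.Perm T.V)) :
    OrbitSet T P φ ≃ OrbitSet T M ψ where
  toFun := map ω τ hcomm
  invFun := map ω.symm τ⁻¹ (ω.symm_comp_eq_comp_inv _ hcomm)
  left_inv χ := Subtype.ext (funext fun x => ω.symm_apply_apply (χ.1 x))
  right_inv χ := Subtype.ext (funext fun x => ω.apply_symm_apply (χ.1 x))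

end OrbitSet

theorem repEquiv_permRep_of_equiv {T P M : FRTree} {φ : T.V → P.V} {ψ : T.V → M.V}
    (e : OrbitSet T P φ ≃ OrbitSet T M ψ)
    (he : ∀ g χ, e (orbAct T P φ g χ) = orbAct T M ψ g (e χ)) :
    RepEquiv (permRep T P φ) (permRep T M ψ) := by
  have he_symm : ∀ g χ, e.symm (orbAct T M ψ g χ) = orbAct T P φ g (e.symm χ) := fun g χ => by
    rw [e.symm_apply_eq, he, e.apply_symm_apply]
  refine ⟨LinearEquiv.funCongrLeft ℂ ℂ e.symm, fun g F => funext fun χ => ?_⟩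
  change F (orbAct T P φ g⁻¹ (e.symm χ)) = F (e.symm (orbAct T M ψ g⁻¹ χ))
  rw [he_symm]

theorem exists_aut_coe_eq_of_isIsom {T : FRTree} {τ : T.V → T.V} (hτ : IsIsom T T τ) :
    ∃ g : T.Aut, ⇑(g : Equiv.Perm T.V) = τ :=
  ⟨⟨Equiv.ofBijective τ hτ.2, hτ.1⟩, rfl⟩

theorem permRep_equiv_of_compEquiv_general
    (T P M : FRTree) (φ : T.V → P.V) (ψ : T.V → M.V)
    (h : CompEquiv T P T M φ ψ) :
    RepEquiv (permRep T P φ) (permRep T M ψ) := by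
  obtain ⟨τ, ω, hτ, hω, hcomm⟩ := h
  obtain ⟨g, rfl⟩ := exists_aut_coe_eq_of_isIsom hτ
  exact repEquiv_permRep_of_equiv (OrbitSet.congr (Equiv.ofBijective ω hω.2) g hcomm)
    (OrbitSet.map_orbAct ω g hcomm)

/-- **Proposition.**  If two tree compositions of `T` are equivalent, then the
corresponding permutation representations of `Aut T` are equivalent. -/
theorem permRep_equiv_of_compEquiv
    (T P M : FRTree) (φ : T.V → P.V) (ψ : T.V → M.V)
    (hφ : IsComposition T P φ) (hψ : IsComposition T M ψ)
    (h : CompEquiv T P T M φ ψ) :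
    RepEquiv (permRep T P φ) (permRep T M ψ) :=
  permRep_equiv_of_compEquiv_general T P M φ ψ h
end
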